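/- arXiv:1201.0574 — 2 statements merged into one kernel-verified Lean document; each statement's English description precedes it below -/
import Mathlib

section
/- If A is a complex Banach algebra and * and # are two involutions on A each making A (with its given norm) into a C*-algebra (i.e. ‖a*a‖ = ‖a‖² and ‖a#a‖ = ‖a‖² for all a), then a* = a# for all a ∈ A. -/
/-!
Let `*` be a C*-involution and `#` any involution satisfying the C*-identity. If `h# = h`, then
`(h + irI)# (h + irI) = h² + r²` for real `r`, so `‖h + irI‖² ≤ ‖h‖² + r²`. Taking imaginary parts
with respect to `*`, the `*`-selfadjoint element `q = ℑ h` satisfies `‖q + r‖² ≤ ‖h‖² + r²`, which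
forces every point `z` of its (real) spectrum to obey `(z + r)² ≤ ‖h‖² + r²` for all `r`, i.e.
`z = 0`; hence `q = 0` and `h* = h`. Writing `a = x + iy` with `x, y` fixed by `#` then gives
`a* = a#`.
-/

open ComplexStarModule Complex

lemma eq_zero_of_forall_add_sq_le_add_sq {z C : ℝ} (h : ∀ r : ℝ, (z + r) ^ 2 ≤ C + r ^ 2) :
    z = 0 := by
  by_contra hz
  have hr := h ((C + 1) / (2 * z))
  have : 2 * z * ((C + 1) / (2 * z)) = C + 1 := by field_simp
  nlinarith [sq_nonneg z]

section CStarAlgebra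

variable {A : Type*} [CStarAlgebra A]

lemma IsSelfAdjoint.eq_zero_of_norm_add_algebraMap_sq_le {q : A} (hq : IsSelfAdjoint q) {C : ℝ}
    (h : ∀ r : ℝ, ‖q + algebraMap ℝ A r‖ ^ 2 ≤ C + r ^ 2) : q = 0 := by
  nontriviality A
  refine CFC.eq_zero_of_spectrum_subset_zero (R := ℝ) q fun z hz => ?_
  refine eq_zero_of_forall_add_sq_le_add_sq (C := C) fun r => ?_
  have hmem : z + r ∈ spectrum ℝ (q + algebraMap ℝ A r) := by
    rwa [add_comm q, spectrum.add_mem_add_iff]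
  calc (z + r) ^ 2 = ‖z + r‖ ^ 2 := by rw [Real.norm_eq_abs, sq_abs]
    _ ≤ ‖q + algebraMap ℝ A r‖ ^ 2 := by gcongr; exact spectrum.norm_le_norm_of_mem hmem
    _ ≤ C + r ^ 2 := h r

lemma isSelfAdjoint_of_norm_add_algebraMap_I_sq_le {h : A}
    (hb : ∀ r : ℝ, ‖h + algebraMap ℂ A (r * I)‖ ^ 2 ≤ ‖h‖ ^ 2 + r ^ 2) : IsSelfAdjoint h := by
  rw [← imaginaryPart_eq_zero_iff]
  refine Subtype.ext ((ℑ h).2.eq_zero_of_norm_add_algebraMap_sq_le (C := ‖h‖ ^ 2) fun r => ?_)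
  calc ‖(ℑ h : A) + algebraMap ℝ A r‖ ^ 2 = ‖ℑ (h + algebraMap ℂ A (r * I))‖ ^ 2 := by
        simp [Algebra.algebraMap_eq_smul_one, imaginaryPart_smul]
    _ ≤ ‖h + algebraMap ℂ A (r * I)‖ ^ 2 := by gcongr; exact imaginaryPart.norm_le _
    _ ≤ ‖h‖ ^ 2 + r ^ 2 := hb r

end CStarAlgebra

structure IsCStarInvolution {A : Type*} [NormedRing A] [NormedAlgebra ℂ A] (s : A → A) : Prop where
  map_add : ∀ x y, s (x + y) = s x + s y
  map_smul : ∀ (c : ℂ) x, s (c • x) = starRingEnd ℂ c • s x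
  map_mul : ∀ x y, s (x * y) = s y * s x
  involutive : Function.Involutive s
  norm_mul_self : ∀ a, ‖s a * a‖ = ‖a‖ ^ 2

namespace IsCStarInvolution

section NormedAlgebra

variable {A : Type*} [NormedRing A] [NormedAlgebra ℂ A] {s : A → A}

lemma map_sub (hs : IsCStarInvolution s) (x y : A) : s (x - y) = s x - s y :=
  eq_sub_of_add_eq (by rw [← hs.map_add, sub_add_cancel])

lemma map_one (hs : IsCStarInvolution s) : s 1 = 1 :=
  calc s 1 = s 1 * s (s 1) := by rw [hs.involutive, mul_one]
    _ = 1 := by rw [← hs.map_mul, mul_one, hs.involutive]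

lemma map_algebraMap (hs : IsCStarInvolution s) (c : ℂ) :
    s (algebraMap ℂ A c) = algebraMap ℂ A (starRingEnd ℂ c) := by
  rw [Algebra.algebraMap_eq_smul_one, Algebra.algebraMap_eq_smul_one, hs.map_smul, hs.map_one]

lemma norm_one_le (hs : IsCStarInvolution s) : ‖(1 : A)‖ ≤ 1 := by
  have h := hs.norm_mul_self 1
  rw [hs.map_one, one_mul] at h
  nlinarith [norm_nonneg (1 : A)]

lemma norm_add_algebraMap_I_sq_le (hs : IsCStarInvolution s) {h : A} (hh : s h = h) (r : ℝ) :
    ‖h + algebraMap ℂ A (r * I)‖ ^ 2 ≤ ‖h‖ ^ 2 + r ^ 2 := by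
  have hcc : algebraMap ℂ A (r * I) * algebraMap ℂ A (r * I) = -algebraMap ℂ A (r ^ 2) := by
    rw [← _root_.map_mul, ← map_neg]; congr 1; ring_nf; rw [I_sq]; ring
  set c := algebraMap ℂ A (r * I)
  have hc : s c = -c := by rw [hs.map_algebraMap, _root_.map_mul, conj_ofReal, conj_I, mul_neg, map_neg]
  have hmul : s (h + c) * (h + c) = h * h + algebraMap ℂ A (r ^ 2) :=
    calc s (h + c) * (h + c) = h * h + (h * c - c * h) - c * c := by
          rw [hs.map_add, hh, hc]; noncomm_ring
      _ = h * h + algebraMap ℂ A (r ^ 2) := by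
          rw [← Algebra.commutes, sub_self, add_zero, hcc, sub_neg_eq_add]
  calc ‖h + c‖ ^ 2 = ‖h * h + algebraMap ℂ A (r ^ 2)‖ := by rw [← hmul, hs.norm_mul_self]
    _ ≤ ‖h‖ * ‖h‖ + r ^ 2 * ‖(1 : A)‖ := by
        refine (norm_add_le _ _).trans (add_le_add (norm_mul_le _ _) ?_)
        rw [norm_algebraMap, ← ofReal_pow, norm_real, Real.norm_of_nonneg (sq_nonneg r)]
    _ ≤ ‖h‖ ^ 2 + r ^ 2 := by
        rw [← sq]; gcongr; exact mul_le_of_le_one_right (sq_nonneg r) hs.norm_one_le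

end NormedAlgebra

lemma apply_eq_star {A : Type*} [CStarAlgebra A] {s : A → A} (hs : IsCStarInvolution s) (a : A) :
    s a = star a := by
  have hfix : ∀ h, s h = h → star h = h := fun h hh =>
    isSelfAdjoint_of_norm_add_algebraMap_I_sq_le (hs.norm_add_algebraMap_I_sq_le hh)
  have hx : star (a + s a) = a + s a := hfix _ (by rw [hs.map_add, hs.involutive, add_comm])
  have hy : star (I • (a - s a)) = I • (a - s a) := hfix _ <| by
    rw [hs.map_smul, hs.map_sub, hs.involutive, conj_I, neg_smul, ← smul_neg, neg_sub]
  refine smul_right_injective A (two_ne_zero : (2 : ℂ) ≠ 0) ?_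
  have hI : I • I • (a - s a) = s a - a := by rw [smul_smul, I_mul_I]; module
  calc (2 : ℂ) • s a = (a + s a) + I • I • (a - s a) := by rw [hI]; module
    _ = star ((a + s a) - I • I • (a - s a)) := by
      rw [star_sub, star_smul, hy, hx, star_def, conj_I, neg_smul, sub_neg_eq_add]
    _ = (2 : ℂ) • star a := by
      rw [hI, ← star_ofNat (R := ℂ), ← star_smul]; congr 1; module

abbrev toCStarAlgebra {A : Type*} [NormedRing A] [NormedAlgebra ℂ A] [CompleteSpace A]
    {t : A → A} (ht : IsCStarInvolution t) : CStarAlgebra A :=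
  { ‹NormedRing A›, ‹NormedAlgebra ℂ A›, ‹CompleteSpace A› with
    star := t
    star_involutive := ht.involutive
    star_mul := ht.map_mul
    star_add := ht.map_add
    norm_mul_self_le := fun x => ((ht.norm_mul_self x).trans (sq ‖x‖)).ge
    star_smul := ht.map_smul }

end IsCStarInvolution

/-- Uniqueness of involution in a C*-algebra (Bohnenblust–Karlin): if a complex
Banach algebra carries two involutions each satisfying the C*-identity for the
given norm, then the involutions coincide. -/
theorem stmt_0 {A : Type*} [NormedRing A] [NormedAlgebra ℂ A] [CompleteSpace A]
    (s t : A → A)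
    (hs_add : ∀ x y, s (x + y) = s x + s y)
    (hs_smul : ∀ (c : ℂ) (x : A), s (c • x) = (starRingEnd ℂ c) • s x)
    (hs_mul : ∀ x y, s (x * y) = s y * s x)
    (hs_inv : ∀ x, s (s x) = x)
    (hs_cstar : ∀ a, ‖s a * a‖ = ‖a‖ ^ 2)
    (ht_add : ∀ x y, t (x + y) = t x + t y)
    (ht_smul : ∀ (c : ℂ) (x : A), t (c • x) = (starRingEnd ℂ c) • t x)
    (ht_mul : ∀ x y, t (x * y) = t y * t x)
    (ht_inv : ∀ x, t (t x) = x)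
    (ht_cstar : ∀ a, ‖t a * a‖ = ‖a‖ ^ 2) :
    ∀ a, s a = t a := by
  have hs : IsCStarInvolution s := ⟨hs_add, hs_smul, hs_mul, hs_inv, hs_cstar⟩
  have ht : IsCStarInvolution t := ⟨ht_add, ht_smul, ht_mul, ht_inv, ht_cstar⟩
  let := ht.toCStarAlgebra
  exact hs.apply_eq_star (A := A)
end

section
/- Let A be a C*-algebra and let # be another involution on A satisfying the C*-identity ‖a#a‖ = ‖a‖² for the given norm. Then the identity map (A, *) → (A, #) is a *-isomorphism; in particular every element that is hermitian for * is hermitian for #. -/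
/-!
In a C⋆-algebra the unitaries are determined by the norm alone: if `u * v = v * u = 1` and
`‖u‖, ‖v‖ ≤ 1`, then `u * star u ≤ 1`, and conjugating `v * star v ≤ 1` by `u` gives
`1 ≤ u * star u`, so `star u = v`. Hence a unitary for `star` is also unitary for `#`, with
`u# = u⁻¹ = star u`. Both involutions commute with `exp`, so for skew-adjoint `x` the curves
`exp (t • x#)` and `exp (t • star x)` coincide, and differentiating at `t = 0` gives
`x# = star x`. Real and imaginary parts extend this to all of `A`.
-/

open NormedSpace

namespace CStarAlgebra

variable {A : Type*} [CStarAlgebra A]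

theorem mul_star_le_one_of_norm_le_one [PartialOrder A] [StarOrderedRing A] {x : A}
    (hx : ‖x‖ ≤ 1) : x * star x ≤ 1 := by
  rw [← norm_le_one_iff_of_nonneg _ (mul_star_self_nonneg x), CStarRing.norm_self_mul_star]
  exact mul_le_one₀ hx (norm_nonneg x) hx

theorem star_eq_of_mul_eq_one_of_norm_le_one {u v : A} (huv : u * v = 1) (hvu : v * u = 1)
    (hu : ‖u‖ ≤ 1) (hv : ‖v‖ ≤ 1) : star u = v := by
  let := spectralOrder A
  let := spectralOrderedRing A
  have h_le : u * star u ≤ 1 := mul_star_le_one_of_norm_le_one hu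
  have h_ge : 1 ≤ u * star u := by
    simpa [← mul_assoc, huv, ← star_mul] using
      star_right_conjugate_le_conjugate (mul_star_le_one_of_norm_le_one hv) u
  calc star u = v * (u * star u) := by rw [← mul_assoc, hvu, one_mul]
    _ = v := by rw [le_antisymm h_le h_ge, mul_one]

end CStarAlgebra

theorem eq_of_forall_exp_smul_eq {𝕂 𝔸 : Type*} [RCLike 𝕂] [NormedRing 𝔸] [NormedAlgebra 𝕂 𝔸]
    [CompleteSpace 𝔸] {x y : 𝔸} (h : ∀ t : 𝕂, exp (t • x) = exp (t • y)) : x = y := by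
  have hx := hasDerivAt_exp_smul_const (𝕂 := 𝕂) x 0
  have hy := hasDerivAt_exp_smul_const (𝕂 := 𝕂) y 0
  simp only [zero_smul, exp_zero, one_mul, funext h] at hx hy
  exact hx.unique hy

structure CStarInvolution (A : Type*) [NormedRing A] [NormedAlgebra ℂ A] where
  toFun : A → A
  map_add' : ∀ x y, toFun (x + y) = toFun x + toFun y
  map_smul' : ∀ (c : ℂ) x, toFun (c • x) = starRingEnd ℂ c • toFun x
  map_mul' : ∀ x y, toFun (x * y) = toFun y * toFun x
  involutive' : ∀ x, toFun (toFun x) = x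
  norm_mul_self' : ∀ x, ‖toFun x * x‖ = ‖x‖ ^ 2

namespace CStarInvolution

variable {A : Type*} [NormedRing A] [NormedAlgebra ℂ A]

instance : CoeFun (CStarInvolution A) (fun _ ↦ A → A) := ⟨toFun⟩

/-- `A` with `σ` as its star operation. -/
def Carrier (_σ : CStarInvolution A) : Type _ := A

variable (σ : CStarInvolution A)

theorem map_real_smul (t : ℝ) (x : A) : σ (t • x) = t • σ x := by
  simpa [Complex.coe_smul] using σ.map_smul' t x

instance : NormedRing σ.Carrier := inferInstanceAs (NormedRing A)

instance : NormedAlgebra ℂ σ.Carrier := inferInstanceAs (NormedAlgebra ℂ A)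

instance : StarRing σ.Carrier where
  star := σ.toFun
  star_involutive := σ.involutive'
  star_mul := σ.map_mul'
  star_add := σ.map_add'

variable [CompleteSpace A]

instance : CompleteSpace σ.Carrier := inferInstanceAs (CompleteSpace A)

instance : CStarAlgebra σ.Carrier where
  norm_mul_self_le x := (σ.norm_mul_self' x).symm.le.trans_eq' (sq _)
  star_smul := σ.map_smul'

theorem map_exp (x : A) : σ (exp x) = exp (σ x) :=
  star_exp (𝔸 := σ.Carrier) x

theorem apply_eq_star_of_mem_unitary [StarRing A] [CStarRing A] {u : A} (hu : u ∈ unitary A) :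
    σ u = star u := by
  nontriviality A
  have hnorm : ∀ v ∈ unitary A, ‖v‖ ≤ 1 := fun v hv ↦ (CStarRing.norm_of_mem_unitary hv).le
  have h_mul_star : u * star u = 1 := Unitary.mul_star_self_of_mem hu
  have h_star_mul : star u * u = 1 := Unitary.star_mul_self_of_mem hu
  exact CStarAlgebra.star_eq_of_mul_eq_one_of_norm_le_one (A := σ.Carrier) (v := (star u : A))
    h_mul_star h_star_mul (hnorm u hu) (hnorm _ (Unitary.star_mem hu))

variable [StarRing A] [CStarRing A] [StarModule ℂ A]

theorem apply_eq_star_of_mem_skewAdjoint {x : A} (hx : x ∈ skewAdjoint A) : σ x = star x := by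
  let +nondep : NormedAlgebra ℚ A := .restrictScalars ℚ ℂ A
  refine eq_of_forall_exp_smul_eq (𝕂 := ℝ) fun t ↦ ?_
  have hu : exp (t • x) ∈ unitary A :=
    exp_mem_unitary_of_mem_skewAdjoint (skewAdjoint.smul_mem t hx)
  rw [← σ.map_real_smul, ← σ.map_exp, σ.apply_eq_star_of_mem_unitary hu, star_exp, star_smul,
    star_trivial]

theorem apply_eq_self_of_isSelfAdjoint {a : A} (ha : IsSelfAdjoint a) : σ a = a := by
  have h := σ.apply_eq_star_of_mem_skewAdjoint (ha.smul_mem_skewAdjoint Complex.conj_I)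
  rw [σ.map_smul', Complex.conj_I, star_smul, ha.star_eq, Complex.star_def, Complex.conj_I] at h
  exact smul_right_injective A (neg_ne_zero.mpr Complex.I_ne_zero) h

theorem apply_eq_star (a : A) : σ a = star a := by
  have h_re := σ.apply_eq_self_of_isSelfAdjoint (realPart a).prop
  have h_im := σ.apply_eq_self_of_isSelfAdjoint (imaginaryPart a).prop
  conv_lhs => rw [← realPart_add_I_smul_imaginaryPart a]
  conv_rhs => rw [← realPart_add_I_smul_imaginaryPart a]
  rw [σ.map_add', σ.map_smul', h_re, h_im, star_add, star_smul, (realPart a).prop.star_eq,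
    (imaginaryPart a).prop.star_eq, starRingEnd_apply]

end CStarInvolution

/-- Bohnenblust–Karlin restated: if `#` is another involution on a C*-algebra
satisfying the C*-identity for the given norm, then the identity map is a
*-isomorphism from `(A, *)` to `(A, #)`, i.e. `a# = a*` for all `a`; in
particular every *-hermitian element is #-hermitian. -/
theorem stmt_13 {A : Type*} [NormedRing A] [StarRing A] [CStarRing A]
    [CompleteSpace A] [NormedAlgebra ℂ A] [StarModule ℂ A]
    (f : A → A)
    (hf_add : ∀ x y, f (x + y) = f x + f y)
    (hf_smul : ∀ (c : ℂ) (x : A), f (c • x) = (starRingEnd ℂ c) • f x)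
    (hf_mul : ∀ x y, f (x * y) = f y * f x)
    (hf_inv : ∀ x, f (f x) = x)
    (hf_cstar : ∀ a, ‖f a * a‖ = ‖a‖ ^ 2) :
    (∀ a : A, f a = star a) ∧ (∀ a : A, star a = a → f a = a) := by
  let σ : CStarInvolution A := ⟨f, hf_add, hf_smul, hf_mul, hf_inv, hf_cstar⟩
  exact ⟨σ.apply_eq_star, fun a ha ↦ σ.apply_eq_self_of_isSelfAdjoint ha⟩
end
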